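/- arXiv:2103.06468 — 3 statements merged into one kernel-verified Lean document; each statement's English description precedes it below -/
import Mathlib

section
/- Let H be a complete r-uniform r-partite hypergraph such that one of the parts X_1 = {x} consists of a single vertex. Then the edge ideal J = I(H) satisfies J^(n) = J^n for all n ≥ 1. -/
open MvPolynomial

noncomputable def symbolicPower {R : Type*} [CommRing R] (I : Ideal R) (n : ℕ) : Ideal R :=
  sInf { J : Ideal R | ∃ (p : Ideal R) (hp : p.IsPrime),
    p ∈ associatedPrimes R (R ⧸ I) ∧
    J = Ideal.comap (algebraMap R (Localization (@Ideal.primeCompl R _ p hp)))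
        (Ideal.map (algebraMap R (Localization (@Ideal.primeCompl R _ p hp))) (I ^ n)) }

noncomputable def edgeIdeal (k : Type*) {V : Type*} [CommRing k] [DecidableEq V]
    (E : Finset (Finset V)) : Ideal (MvPolynomial V k) :=
  Ideal.span ((fun e : Finset V => ∏ x ∈ e, (X x : MvPolynomial V k)) '' ↑E)

/-!
Write `P_B` for the prime generated by the variables of a part `B`. Since every edge meets every
part, `J ⊆ P_B`, and `P_B` is an associated prime of `k[V]/J`: it is the colon of `J` by a
monomial with one vertex in each other part. So `a ∈ J^(n)` gives `s a ∈ J^n ⊆ P_B^n` with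
`s ∉ P_B`. Substituting `x ↦ x T` for `x ∈ B` turns the `B`-degree of monomials into the `T`-adic
order, and `T` is prime, so every monomial of `a` has degree at least `n` in every part. By
completeness such a monomial is divisible by a product of `n` edges. If some part is empty there
are no edges and `J = 0`.
-/

section SymbolicPower

variable {R : Type*} [CommRing R]

theorem pow_le_symbolicPower (I : Ideal R) (n : ℕ) : I ^ n ≤ symbolicPower I n :=
  le_sInf fun _ ⟨_, _, _, hK⟩ => hK ▸ Ideal.le_comap_map

theorem exists_mul_mem_pow_of_mem_symbolicPower {I p : Ideal R} {n : ℕ} {a : R}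
    (ha : a ∈ symbolicPower I n) (hp : p ∈ associatedPrimes R (R ⧸ I)) :
    ∃ s ∉ p, s * a ∈ I ^ n := by
  have hprime : p.IsPrime := hp.isPrime
  have hmem := Submodule.mem_sInf.mp ha _ ⟨p, hprime, hp, rfl⟩
  rwa [Ideal.mem_comap, IsLocalization.algebraMap_mem_map_algebraMap_iff p.primeCompl] at hmem

theorem mem_associatedPrimes_quotient {I p : Ideal R} [hp : p.IsPrime] (m : R)
    (h : ∀ a, a ∈ p ↔ a * m ∈ I) : p ∈ associatedPrimes R (R ⧸ I) := by
  refine ⟨hp, Ideal.Quotient.mk I m, ?_⟩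
  rw [← hp.radical]
  congr 1
  ext a
  rw [h, Submodule.mem_colon_singleton, Submodule.mem_bot, Algebra.smul_def,
    Ideal.Quotient.algebraMap_eq, ← map_mul, Ideal.Quotient.eq_zero_iff_mem]

theorem symbolicPower_bot [IsDomain R] (n : ℕ) : symbolicPower (⊥ : Ideal R) n = ⊥ ^ n := by
  refine le_antisymm (fun a ha => ?_) (pow_le_symbolicPower ⊥ n)
  obtain ⟨s, hs, hsa⟩ := exists_mul_mem_pow_of_mem_symbolicPower ha
    (mem_associatedPrimes_quotient (p := ⊥) 1 fun a => by simp)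
  rcases n with _ | n
  · simp
  · rw [Ideal.bot_pow n.succ_ne_zero, Ideal.mem_bot] at hsa ⊢
    exact (mul_eq_zero.mp hsa).resolve_left hs

end SymbolicPower

namespace MvPolynomial

variable {V : Type*}

def degreeIn (B : Finset V) (d : V →₀ ℕ) : ℕ := ∑ v ∈ B, d v

theorem degreeIn_add (B : Finset V) (d e : V →₀ ℕ) :
    degreeIn B (d + e) = degreeIn B d + degreeIn B e := by
  simp [degreeIn, Finset.sum_add_distrib]

theorem degreeIn_pos_iff {B : Finset V} {d : V →₀ ℕ} :
    0 < degreeIn B d ↔ ∃ v ∈ B, d v ≠ 0 := by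
  simp [degreeIn, Finset.sum_pos_iff, Nat.pos_iff_ne_zero]

variable [DecidableEq V]

theorem degreeIn_sum_single_one (B e : Finset V) :
    degreeIn B (∑ x ∈ e, Finsupp.single x 1) = (e ∩ B).card := by
  simp [degreeIn, Finsupp.finsetSum_apply, Finsupp.single_apply, Finset.inter_comm]

theorem sum_support_ite_mul_eq_degreeIn (B : Finset V) (d : V →₀ ℕ) :
    ∑ v ∈ d.support, (if v ∈ B then 1 else 0) * d v = degreeIn B d := by
  have hB : ∑ v ∈ d.support ∩ B, d v = degreeIn B d :=
    Finset.sum_subset Finset.inter_subset_right fun v hvB hv => by simpa [hvB] using hv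
  simp [← hB]

variable {k : Type*} [CommRing k]

noncomputable def gradeBy (B : Finset V) :
    MvPolynomial V k →ₐ[k] Polynomial (MvPolynomial V k) :=
  aeval fun v => Polynomial.C (X v) * Polynomial.X ^ (if v ∈ B then 1 else 0)

theorem gradeBy_monomial (B : Finset V) (d : V →₀ ℕ) (c : k) :
    gradeBy B (monomial d c) = Polynomial.C (monomial d c) * Polynomial.X ^ degreeIn B d := by
  rw [gradeBy, aeval_monomial, Finsupp.prod, monomial_eq, Finsupp.prod]
  simp_rw [mul_pow, ← pow_mul, Finset.prod_mul_distrib, Finset.prod_pow_eq_pow_sum, ← map_pow,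
    ← map_prod, sum_support_ite_mul_eq_degreeIn, map_mul]
  simp [mul_assoc]

theorem coeff_coeff_gradeBy (B : Finset V) (f : MvPolynomial V k) (m : ℕ) (d : V →₀ ℕ) :
    ((gradeBy B f).coeff m).coeff d = if degreeIn B d = m then f.coeff d else 0 := by
  induction f using MvPolynomial.induction_on' with
  | monomial d' c =>
    rw [gradeBy_monomial, Polynomial.coeff_C_mul_X_pow, coeff_monomial]
    by_cases hd : d' = d
    · subst hd
      split_ifs <;> simp_all [eq_comm]
    · split_ifs <;> simp [hd]
  | add f g hf hg => simp [hf, hg, ite_add_zero]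

theorem X_pow_dvd_gradeBy_iff {B : Finset V} {f : MvPolynomial V k} {n : ℕ} :
    Polynomial.X ^ n ∣ gradeBy B f ↔ ∀ d ∈ f.support, n ≤ degreeIn B d := by
  refine ⟨fun h d hd => ?_, fun h => ?_⟩
  · by_contra! hlt
    have := congr_arg (coeff d) (Polynomial.X_pow_dvd_iff.mp h _ hlt)
    rw [coeff_coeff_gradeBy, if_pos rfl] at this
    exact mem_support_iff.mp hd this
  · rw [f.as_sum, map_sum]
    exact Finset.dvd_sum fun d hd => by
      rw [gradeBy_monomial]
      exact Dvd.dvd.mul_left (pow_dvd_pow _ (h d hd)) _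

theorem mem_span_X_image_iff_X_dvd_gradeBy {B : Finset V} {f : MvPolynomial V k} :
    f ∈ Ideal.span (X '' ↑B) ↔ Polynomial.X ∣ gradeBy B f := by
  rw [mem_ideal_span_X_image, ← pow_one Polynomial.X, X_pow_dvd_gradeBy_iff]
  simp only [Finset.mem_coe, ← degreeIn_pos_iff, Nat.one_le_iff_ne_zero, Nat.pos_iff_ne_zero]

theorem isPrime_span_X_image [IsDomain k] (B : Finset V) :
    (Ideal.span (X '' ↑B) : Ideal (MvPolynomial V k)).IsPrime := by
  have : Ideal.span (X '' ↑B) = (Ideal.span {Polynomial.X}).comap (gradeBy (k := k) B) := by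
    ext f
    rw [Ideal.mem_comap, Ideal.mem_span_singleton, mem_span_X_image_iff_X_dvd_gradeBy]
  rw [this]
  have := (Ideal.span_singleton_prime Polynomial.X_ne_zero).mpr
    (Polynomial.prime_X (R := MvPolynomial V k))
  exact Ideal.comap_isPrime _ _

theorem X_mem_span_X_image_iff [Nontrivial k] {v : V} {s : Set V} :
    (X v : MvPolynomial V k) ∈ Ideal.span (X '' s) ↔ v ∈ s := by
  rw [mem_ideal_span_X_image]
  simp [support_X, Finsupp.single_apply]

theorem degreeIn_le_of_mul_mem_pow [IsDomain k] {B : Finset V} {s f : MvPolynomial V k} {n : ℕ}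
    (hs : s ∉ Ideal.span (X '' ↑B)) (h : s * f ∈ Ideal.span (X '' ↑B) ^ n) :
    ∀ d ∈ f.support, n ≤ degreeIn B d := by
  have hle : Ideal.span (X '' ↑B) ≤ (Ideal.span {Polynomial.X}).comap (gradeBy (k := k) B) :=
    fun g hg => Ideal.mem_span_singleton.mpr (mem_span_X_image_iff_X_dvd_gradeBy.mp hg)
  have hsf := Ideal.le_comap_pow _ n (Ideal.pow_right_mono hle n h)
  rw [Ideal.mem_comap, Ideal.span_singleton_pow, Ideal.mem_span_singleton, map_mul] at hsf
  refine X_pow_dvd_gradeBy_iff.mp (Polynomial.prime_X.pow_dvd_of_dvd_mul_left n ?_ hsf)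
  rwa [← mem_span_X_image_iff_X_dvd_gradeBy]

end MvPolynomial

section EdgeIdeal

variable {k V : Type*} [CommRing k] [DecidableEq V]

theorem edgeIdeal_empty : edgeIdeal k (∅ : Finset (Finset V)) = ⊥ := by
  simp [edgeIdeal]

theorem prod_X_mem_edgeIdeal {E : Finset (Finset V)} {e : Finset V} (he : e ∈ E) :
    ∏ x ∈ e, (X x : MvPolynomial V k) ∈ edgeIdeal k E :=
  Ideal.subset_span ⟨e, he, rfl⟩

theorem edgeIdeal_le_span_X_image {E : Finset (Finset V)} {B : Finset V}
    (h : ∀ e ∈ E, (e ∩ B).Nonempty) : edgeIdeal k E ≤ Ideal.span (X '' ↑B) := by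
  refine Ideal.span_le.mpr ?_
  rintro _ ⟨e, he, rfl⟩
  obtain ⟨v, hv⟩ := h e he
  rw [Finset.mem_inter] at hv
  exact Ideal.mem_of_dvd _ (Finset.dvd_prod_of_mem _ hv.1) (Ideal.subset_span ⟨v, hv.2, rfl⟩)

variable {r : ℕ} {E : Finset (Finset V)} {Xp : Fin r → Finset V}

theorem monomial_mem_edgeIdeal_pow (hpartite : ∀ e ∈ E, ∀ i, (e ∩ Xp i).card = 1)
    (hcomplete : ∀ f : Fin r → V, (∀ i, f i ∈ Xp i) → Finset.image f Finset.univ ∈ E)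
    {n : ℕ} {d : V →₀ ℕ} (c : k) (h : ∀ i, n ≤ degreeIn (Xp i) d) :
    monomial d c ∈ edgeIdeal k E ^ n := by
  induction n generalizing d with
  | zero => simp
  | succ n ih =>
    choose v hvX hvd using fun i => degreeIn_pos_iff.mp (n.succ_pos.trans_le (h i))
    set e := Finset.image v Finset.univ
    have he : e ∈ E := hcomplete v hvX
    set g : V →₀ ℕ := ∑ x ∈ e, Finsupp.single x 1
    have hgd : g ≤ d := by
      intro u
      simp only [g, Finsupp.finsetSum_apply, Finsupp.single_apply, Finset.sum_ite_eq']
      split_ifs with hu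
      · obtain ⟨i, -, rfl⟩ := Finset.mem_image.mp hu
        exact Nat.one_le_iff_ne_zero.mpr (hvd i)
      · exact Nat.zero_le _
    have hg : monomial g (1 : k) = ∏ x ∈ e, X x := monomial_sum_one _ _
    have hpg : ∀ i, degreeIn (Xp i) g = 1 := fun i => by
      rw [degreeIn_sum_single_one, hpartite e he i]
    have hsplit : monomial d c = monomial g 1 * monomial (d - g) c := by
      rw [monomial_mul, one_mul, add_tsub_cancel_of_le hgd]
    rw [hsplit, pow_succ']
    refine Ideal.mul_mem_mul (hg ▸ prod_X_mem_edgeIdeal he) (ih fun i => ?_)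
    have hsum := degreeIn_add (Xp i) (d - g) g
    rw [tsub_add_cancel_of_le hgd, hpg] at hsum
    have hn := h i
    omega

theorem edgeIdeal_le_span_X_image_part (hpartite : ∀ e ∈ E, ∀ i, (e ∩ Xp i).card = 1)
    (i : Fin r) : edgeIdeal k E ≤ Ideal.span (X '' ↑(Xp i)) :=
  edgeIdeal_le_span_X_image fun e he => Finset.card_pos.mp (by rw [hpartite e he i]; exact one_pos)

theorem prod_X_mem_edgeIdeal_of_mem_parts (hdisj : Pairwise fun i j => Disjoint (Xp i) (Xp j))
    (hcomplete : ∀ f : Fin r → V, (∀ i, f i ∈ Xp i) → Finset.image f Finset.univ ∈ E)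
    {w : Fin r → V} (hw : ∀ j, w j ∈ Xp j) :
    ∏ j, (X (w j) : MvPolynomial V k) ∈ edgeIdeal k E := by
  have hinj : Set.InjOn w ↑(Finset.univ : Finset (Fin r)) := fun i _ j _ hij => by
    by_contra hne
    exact Finset.disjoint_left.mp (hdisj hne) (hw i) (hij ▸ hw j)
  rw [← Finset.prod_image hinj]
  exact prod_X_mem_edgeIdeal (hcomplete w hw)

theorem span_X_image_mem_associatedPrimes [IsDomain k]
    (hdisj : Pairwise fun i j => Disjoint (Xp i) (Xp j))
    (hpartite : ∀ e ∈ E, ∀ i, (e ∩ Xp i).card = 1)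
    (hcomplete : ∀ f : Fin r → V, (∀ i, f i ∈ Xp i) → Finset.image f Finset.univ ∈ E)
    (hne : ∀ j, (Xp j).Nonempty) (i : Fin r) :
    Ideal.span (X '' ↑(Xp i)) ∈
      associatedPrimes (MvPolynomial V k) (MvPolynomial V k ⧸ edgeIdeal k E) := by
  choose t ht using hne
  have hprime := isPrime_span_X_image (k := k) (Xp i)
  set m : MvPolynomial V k := ∏ j ∈ Finset.univ.erase i, X (t j)
  refine mem_associatedPrimes_quotient m fun a => ⟨fun ha => ?_, fun ha => ?_⟩
  · suffices Ideal.span (X '' ↑(Xp i)) ≤ (edgeIdeal k E).colon {m} from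
      Submodule.mem_colon_singleton.mp (this ha)
    refine Ideal.span_le.mpr ?_
    rintro _ ⟨v, hv, rfl⟩
    have hw : ∀ j, Function.update t i v j ∈ Xp j := fun j => by
      rcases eq_or_ne j i with rfl | hj
      · simpa using hv
      · simpa [hj] using ht j
    have := prod_X_mem_edgeIdeal_of_mem_parts hdisj hcomplete (k := k) hw
    rw [← Finset.mul_prod_erase _ _ (Finset.mem_univ i), Function.update_self,
      Finset.prod_congr rfl fun j hj => by rw [Function.update_of_ne (Finset.ne_of_mem_erase hj)]]
      at this
    exact Submodule.mem_colon_singleton.mpr this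
  · have hm : m ∉ Ideal.span (X '' ↑(Xp i)) := by
      rw [Ideal.IsPrime.prod_mem_iff]
      rintro ⟨j, hj, htj⟩
      exact Finset.disjoint_left.mp (hdisj (Finset.ne_of_mem_erase hj)) (ht j)
        (X_mem_span_X_image_iff.mp htj)
    exact (hprime.mem_or_mem (edgeIdeal_le_span_X_image_part hpartite i ha)).resolve_right hm

theorem symbolicPower_edgeIdeal_eq_pow [IsDomain k]
    (hdisj : Pairwise fun i j => Disjoint (Xp i) (Xp j))
    (hpartite : ∀ e ∈ E, ∀ i, (e ∩ Xp i).card = 1)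
    (hcomplete : ∀ f : Fin r → V, (∀ i, f i ∈ Xp i) → Finset.image f Finset.univ ∈ E)
    (hne : ∀ j, (Xp j).Nonempty) (n : ℕ) :
    symbolicPower (edgeIdeal k E) n = edgeIdeal k E ^ n := by
  refine le_antisymm (fun a ha => ?_) (pow_le_symbolicPower _ n)
  have hdeg : ∀ i, ∀ d ∈ a.support, n ≤ degreeIn (Xp i) d := fun i => by
    obtain ⟨s, hs, hsa⟩ := exists_mul_mem_pow_of_mem_symbolicPower ha
      (span_X_image_mem_associatedPrimes hdisj hpartite hcomplete hne i)
    exact degreeIn_le_of_mul_mem_pow hs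
      (Ideal.pow_right_mono (edgeIdeal_le_span_X_image_part hpartite i) n hsa)
  rw [a.as_sum]
  exact Ideal.sum_mem _ fun d hd =>
    monomial_mem_edgeIdeal_pow hpartite hcomplete _ fun i => hdeg i d hd

end EdgeIdeal

theorem stmt3_general {k V : Type*} [Field k] [DecidableEq V]
    (r : ℕ) (E : Finset (Finset V))
    (Xp : Fin r → Finset V)
    (hdisj : Pairwise fun i j => Disjoint (Xp i) (Xp j))
    (hpartite : ∀ e ∈ E, ∀ i, (e ∩ Xp i).card = 1)
    (hcomplete : ∀ f : Fin r → V, (∀ i, f i ∈ Xp i) → Finset.image f Finset.univ ∈ E) :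
    ∀ n : ℕ, 1 ≤ n → symbolicPower (edgeIdeal k E) n = (edgeIdeal k E) ^ n := by
  intro n _
  by_cases hne : ∀ i, (Xp i).Nonempty
  · exact symbolicPower_edgeIdeal_eq_pow hdisj hpartite hcomplete hne n
  · obtain ⟨i, hi⟩ := not_forall.mp hne
    have hE : E = ∅ := Finset.eq_empty_of_forall_notMem fun e he => by
      simpa [Finset.not_nonempty_iff_eq_empty.mp hi] using hpartite e he i
    rw [hE, edgeIdeal_empty, symbolicPower_bot]

/-- for a complete r-uniform r-partite hypergraph one of whose parts
is a single vertex, all symbolic powers of the edge ideal agree with ordinary powers. -/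
theorem stmt3 {k V : Type*} [Field k] [Fintype V] [DecidableEq V]
    (r : ℕ) (hr : 1 ≤ r) (E : Finset (Finset V))
    (huniform : ∀ e ∈ E, e.card = r)
    (Xp : Fin r → Finset V)
    (hdisj : Pairwise fun i j => Disjoint (Xp i) (Xp j))
    (hcover : ∀ v : V, ∃ i, v ∈ Xp i)
    (hpartite : ∀ e ∈ E, ∀ i, (e ∩ Xp i).card = 1)
    (hcomplete : ∀ f : Fin r → V, (∀ i, f i ∈ Xp i) → Finset.image f Finset.univ ∈ E)
    (x : V) (i₀ : Fin r) (hx : Xp i₀ = {x}) :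
    ∀ n : ℕ, 1 ≤ n → symbolicPower (edgeIdeal k E) n = (edgeIdeal k E) ^ n :=
  stmt3_general r E Xp hdisj hpartite hcomplete
end

section
/- Let H be a simple 3-uniform 3-partite hypergraph with edge ideal I = I(H). If I^(2) ≠ I^2, then H contains a subhypergraph isomorphic to the bad hypergraph of length 3, i.e., there exist three hyperedges E_1, E_2, E_3 of H that pairwise intersect in exactly one vertex, with the three intersection vertices E_1∩E_2, E_2∩E_3, E_1∩E_3 pairwise distinct. -/
open MvPolynomial

/-- three hyperedges forming a bad subhypergraph of length 3: pairwise distinct,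
pairwise intersecting in exactly one vertex, with the three intersection vertices
pairwise distinct. -/
def BadTriple {V : Type*} [DecidableEq V] (E : Finset (Finset V))
    (e₁ e₂ e₃ : Finset V) : Prop :=
  e₁ ∈ E ∧ e₂ ∈ E ∧ e₃ ∈ E ∧ e₁ ≠ e₂ ∧ e₂ ≠ e₃ ∧ e₁ ≠ e₃ ∧
  (e₁ ∩ e₂).card = 1 ∧ (e₂ ∩ e₃).card = 1 ∧ (e₁ ∩ e₃).card = 1 ∧
  e₁ ∩ e₂ ≠ e₂ ∩ e₃ ∧ e₂ ∩ e₃ ≠ e₁ ∩ e₃ ∧ e₁ ∩ e₂ ≠ e₁ ∩ e₃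

/-!
Every monomial `x^m` of a polynomial in `I^(2)` satisfies `∑ v ∈ C, m v ≥ 2` for every vertex
cover `C`: for a minimal cover the prime `(x_v : v ∈ C)` is
associated to `R ⧸ I`, and the order of vanishing along it is additive. So it suffices to find
two edges `e₁, e₂` with `1_{e₁} + 1_{e₂} ≤ m`. If there are none, the edges on which `m` is
positive pairwise meet in a vertex where `m = 1`. Such a family has a common vertex `u` with
`m u = 1`: without a bad triple, tripartiteness shows that when two of its edges meet in a
single vertex, every edge meeting both contains it, and otherwise all its edges share the two
vertices of any pairwise intersection. Then `{u} ∪ {m = 0}` is a vertex cover of weight `1`.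
-/

namespace MvPolynomial

variable {σ R : Type*} [CommRing R] (s : Set σ)

/-- The order of vanishing along `{x_v = 0 | v ∈ s}`: the least `s`-degree of a monomial. -/
noncomputable def varsOrder (f : MvPolynomial σ R) : ℕ∞ :=
  (f : MvPowerSeries σ R).weightedOrder (s.indicator 1 : σ → ℕ)

theorem varsOrder_mul [IsDomain R] (f g : MvPolynomial σ R) :
    varsOrder s (f * g) = varsOrder s f + varsOrder s g := by
  simp only [varsOrder, coe_mul, MvPowerSeries.weightedOrder_mul]

theorem varsOrder_le_weight {f : MvPolynomial σ R} {m : σ →₀ ℕ} (hm : m ∈ f.support) :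
    varsOrder s f ≤ Finsupp.weight (s.indicator 1 : σ → ℕ) m :=
  MvPowerSeries.weightedOrder_le _ (by rwa [coeff_coe, ← mem_support_iff])

theorem varsOrder_eq_zero_of_notMem {f : MvPolynomial σ R} (hf : f ∉ Ideal.span (X '' s)) :
    varsOrder s f = 0 := by
  simp only [mem_ideal_span_X_image, not_forall, not_exists, not_and, not_not] at hf
  obtain ⟨m, hm, hms⟩ := hf
  refine nonpos_iff_eq_zero.mp ((varsOrder_le_weight s hm).trans_eq ?_)
  rw [Nat.cast_eq_zero, Finsupp.weight_apply]
  refine Finset.sum_eq_zero fun i _ => ?_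
  by_cases hi : i ∈ s <;> simp [hi, hms]

theorem one_le_varsOrder_of_mem {f : MvPolynomial σ R} (hf : f ∈ Ideal.span (X '' s)) :
    1 ≤ varsOrder s f := by
  rw [mem_ideal_span_X_image] at hf
  refine MvPowerSeries.nat_le_weightedOrder _ fun m hm => ?_
  rw [coeff_coe, ← notMem_support_iff]
  intro hmf
  obtain ⟨i, hi, hmi⟩ := hf m hmf
  have := Finsupp.le_weight_of_ne_zero' (s.indicator 1 : σ → ℕ) hmi
  simp only [Set.indicator_of_mem hi, Pi.one_apply] at this
  omega

theorem le_varsOrder_of_mem_pow {n : ℕ} {f : MvPolynomial σ R}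
    (hf : f ∈ Ideal.span (X '' s) ^ n) : n ≤ varsOrder s f := by
  induction n generalizing f with
  | zero => simp
  | succ n ih =>
    rw [pow_succ] at hf
    refine Submodule.mul_induction_on hf (fun a ha b hb => ?_) (fun a b ha hb => ?_)
    · rw [Nat.cast_succ]
      exact (add_le_add (ih ha) (one_le_varsOrder_of_mem s hb)).trans
        (by simpa only [varsOrder, coe_mul] using MvPowerSeries.le_weightedOrder_mul _)
    · exact (le_min ha hb).trans
        (by simpa only [varsOrder, coe_add] using MvPowerSeries.min_weightedOrder_le_add _)

theorem isPrime_span_X_image_s6 [IsDomain R] :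
    (Ideal.span (X '' s : Set (MvPolynomial σ R))).IsPrime := by
  refine ⟨fun h => ?_, fun {f g} hfg => ?_⟩
  · have := one_le_varsOrder_of_mem s ((Ideal.eq_top_iff_one _).mp h)
    simp [varsOrder, MvPowerSeries.weightedOrder_one] at this
  · by_contra! h
    have := one_le_varsOrder_of_mem s hfg
    rw [varsOrder_mul, varsOrder_eq_zero_of_notMem s h.1, varsOrder_eq_zero_of_notMem s h.2]
      at this
    simp at this

theorem le_weight_of_mul_mem_pow [IsDomain R] {n : ℕ} {t f : MvPolynomial σ R}
    (ht : t ∉ Ideal.span (X '' s)) (htf : t * f ∈ Ideal.span (X '' s) ^ n)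
    {m : σ →₀ ℕ} (hm : m ∈ f.support) : n ≤ Finsupp.weight (s.indicator 1 : σ → ℕ) m := by
  have h := le_varsOrder_of_mem_pow s htf
  rw [varsOrder_mul, varsOrder_eq_zero_of_notMem s ht, zero_add] at h
  exact_mod_cast h.trans (varsOrder_le_weight s hm)

end MvPolynomial

theorem Finsupp.weight_indicator_one {σ : Type*} (C : Finset σ) (m : σ →₀ ℕ) :
    weight ((C : Set σ).indicator 1 : σ → ℕ) m = ∑ v ∈ C, m v := by
  classical
  rw [weight_apply, Finsupp.sum]
  simp only [Set.indicator_apply, Finset.mem_coe, Pi.one_apply, smul_eq_mul, mul_ite, mul_one,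
    mul_zero, Finset.sum_ite_mem]
  exact Finset.sum_subset Finset.inter_subset_right fun i _ hi => by simp_all

section SymbolicPower

variable {R : Type*} [CommRing R]

theorem exists_notMem_mul_mem_of_mem_symbolicPower {I P : Ideal R} {n : ℕ} {f : R}
    (hf : f ∈ symbolicPower I n) (hP : P ∈ associatedPrimes R (R ⧸ I)) :
    ∃ t ∉ P, t * f ∈ I ^ n := by
  have : P.IsPrime := hP.1
  have hloc := Submodule.mem_sInf.mp hf _ ⟨P, this, hP, rfl⟩
  rwa [Ideal.mem_comap, IsLocalization.algebraMap_mem_map_algebraMap_iff P.primeCompl] at hloc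

theorem mem_associatedPrimes_of_forall_mul_mem_iff {I P : Ideal R} [P.IsPrime] {u : R}
    (h : ∀ r, r * u ∈ I ↔ r ∈ P) : P ∈ associatedPrimes R (R ⧸ I) := by
  refine ⟨‹_›, Ideal.Quotient.mk I u, ?_⟩
  suffices hcolon : (⊥ : Submodule R (R ⧸ I)).colon {Ideal.Quotient.mk I u} = P by
    rw [hcolon, Ideal.IsPrime.radical ‹_›]
  ext r
  rw [Submodule.mem_colon_singleton, Submodule.mem_bot, ← h, ← Ideal.Quotient.eq_zero_iff_mem]
  rfl

end SymbolicPower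

def IsVertexCover {V : Type*} (E : Finset (Finset V)) (C : Finset V) : Prop :=
  ∀ e ∈ E, ∃ v ∈ e, v ∈ C

section EdgeIdeal

variable {k V : Type*} [CommRing k] [DecidableEq V] {E : Finset (Finset V)} {C : Finset V}

theorem edgeIdeal_le_span_X_image_s6 (hC : IsVertexCover E C) :
    edgeIdeal k E ≤ Ideal.span (X '' ↑C) := by
  refine Ideal.span_le.mpr ?_
  rintro _ ⟨e, he, rfl⟩
  obtain ⟨v, hve, hvC⟩ := hC e he
  exact Ideal.mem_of_dvd _ (Finset.dvd_prod_of_mem _ hve)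
    (Ideal.subset_span (Set.mem_image_of_mem X hvC))

theorem monomial_mem_edgeIdeal_sq {e₁ e₂ : Finset V} (he₁ : e₁ ∈ E) (he₂ : e₂ ∈ E)
    {m : V →₀ ℕ} (hm : ∀ v, (if v ∈ e₁ then 1 else 0) + (if v ∈ e₂ then 1 else 0) ≤ m v)
    (c : k) : monomial m c ∈ edgeIdeal k E ^ 2 := by
  have hprod (e : Finset V) :
      ∏ v ∈ e, (X v : MvPolynomial V k) = monomial (∑ v ∈ e, Finsupp.single v 1) 1 :=
    (monomial_sum_one _ _).symm
  set d := (∑ v ∈ e₁, Finsupp.single v 1) + ∑ v ∈ e₂, Finsupp.single v 1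
  have hle : d ≤ m := fun v => by
    simpa [d, Finsupp.finsetSum_apply, Finsupp.single_apply] using hm v
  refine Ideal.mem_of_dvd _ ⟨monomial (m - d) c, ?_⟩ (pow_two (edgeIdeal k E) ▸
    Ideal.mul_mem_mul (Ideal.subset_span (Set.mem_image_of_mem _ he₁))
      (Ideal.subset_span (Set.mem_image_of_mem _ he₂)))
  rw [hprod, hprod, monomial_mul, monomial_mul, one_mul, one_mul, add_tsub_cancel_of_le hle]

variable [Fintype V]

theorem exists_subset_insert_compl_of_minimal (hC : Minimal (IsVertexCover E) C) {w : V}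
    (hw : w ∈ C) : ∃ e ∈ E, e ⊆ insert w Cᶜ := by
  have hnot := hC.not_prop_of_lt (Finset.erase_ssubset hw)
  simp only [IsVertexCover, not_forall, not_exists, not_and] at hnot
  obtain ⟨e, he, hnot⟩ := hnot
  refine ⟨e, he, fun v hv => ?_⟩
  by_cases hvC : v ∈ C
  · exact Finset.mem_insert.mpr
      (Or.inl (by_contra fun hvw => hnot v hv (Finset.mem_erase.mpr ⟨hvw, hvC⟩)))
  · exact Finset.mem_insert_of_mem (Finset.mem_compl.mpr hvC)

theorem span_X_image_mem_associatedPrimes_s6 [IsDomain k] (hC : Minimal (IsVertexCover E) C) :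
    Ideal.span (X '' ↑C) ∈
      associatedPrimes (MvPolynomial V k) (MvPolynomial V k ⧸ edgeIdeal k E) := by
  have hP := isPrime_span_X_image_s6 (R := k) (C : Set V)
  have hu : ∏ v ∈ Cᶜ, X v ∉ Ideal.span (X '' (C : Set V) : Set (MvPolynomial V k)) := by
    rw [Ideal.IsPrime.prod_mem_iff]
    rintro ⟨v, hv, hXv⟩
    simp only [mem_ideal_span_X_image, support_X, Finset.mem_singleton, forall_eq,
      Finsupp.single_apply_ne_zero] at hXv
    obtain ⟨i, hiC, rfl, -⟩ := hXv
    exact Finset.mem_compl.mp hv hiC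
  refine mem_associatedPrimes_of_forall_mul_mem_iff (u := ∏ v ∈ Cᶜ, X v) fun r =>
    ⟨fun hr => (hP.mem_or_mem (edgeIdeal_le_span_X_image_s6 hC.prop hr)).resolve_right hu,
      fun hr => ?_⟩
  refine Submodule.span_induction ?_ (by simp) (fun a b _ _ ha hb => ?_) (fun a b _ hb => ?_) hr
  · rintro _ ⟨w, hw, rfl⟩
    obtain ⟨e, he, hew⟩ := exists_subset_insert_compl_of_minimal hC hw
    rw [← Finset.prod_insert (Finset.notMem_compl.mpr hw)]
    exact Ideal.mem_of_dvd _ (Finset.prod_dvd_prod_of_subset _ _ _ hew)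
      (Ideal.subset_span (Set.mem_image_of_mem _ he))
  · rw [add_mul]
    exact add_mem ha hb
  · rw [smul_eq_mul, mul_assoc]
    exact Ideal.mul_mem_left _ _ hb

theorem le_sum_of_mem_symbolicPower [IsDomain k] {n : ℕ} {f : MvPolynomial V k}
    (hf : f ∈ symbolicPower (edgeIdeal k E) n) {m : V →₀ ℕ} (hm : m ∈ f.support)
    (hC : IsVertexCover E C) : n ≤ ∑ v ∈ C, m v := by
  obtain ⟨D, hDC, hD⟩ := exists_minimal_le_of_wellFoundedLT (IsVertexCover E) C hC
  obtain ⟨t, ht, htf⟩ :=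
    exists_notMem_mul_mem_of_mem_symbolicPower hf (span_X_image_mem_associatedPrimes_s6 hD)
  have hDm := le_weight_of_mul_mem_pow _ ht
    (Ideal.pow_right_mono (edgeIdeal_le_span_X_image_s6 hD.prop) n htf) hm
  rw [Finsupp.weight_indicator_one] at hDm
  exact hDm.trans (Finset.sum_le_sum_of_subset hDC)

end EdgeIdeal

section Tripartite

open Finset

theorem Finset.erase_subset_of_card_le {α : Type*} [DecidableEq α] {s t : Finset α} {a : α}
    (ha : a ∈ s) (hat : a ∉ t) (h : #s ≤ #(s ∩ t) + 1) : s.erase a ⊆ t := by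
  have hsub : s ∩ t ⊆ s.erase a := fun v hv =>
    mem_erase.mpr ⟨fun hva => hat (hva ▸ (mem_inter.mp hv).2), (mem_inter.mp hv).1⟩
  rw [← eq_of_subset_of_card_le hsub (by rw [card_erase_of_mem ha]; omega)]
  exact inter_subset_right

variable {V : Type*}

structure IsTripartite (E : Finset (Finset V)) (π : V → Fin 3) : Prop where
  card_eq : ∀ e ∈ E, #e = 3
  injOn : ∀ e ∈ E, Set.InjOn π e

namespace IsTripartite

theorem of_mem_parts [DecidableEq V] {E : Finset (Finset V)} {Xp : Fin 3 → Finset V}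
    {π : V → Fin 3} (hcard : ∀ e ∈ E, #e = 3) (hπ : ∀ v, v ∈ Xp (π v))
    (hparts : ∀ e ∈ E, ∀ i, #(e ∩ Xp i) = 1) : IsTripartite E π :=
  ⟨hcard, fun e he u hu v hv huv => card_le_one.mp (hparts e he (π u)).le u
    (mem_inter.mpr ⟨hu, hπ u⟩) v (mem_inter.mpr ⟨hv, huv ▸ hπ v⟩)⟩

variable {E : Finset (Finset V)} {π : V → Fin 3} {e f g : Finset V}

theorem exists_mem_eq (hE : IsTripartite E π) (he : e ∈ E) (i : Fin 3) : ∃ v ∈ e, π v = i := by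
  have himage : e.image π = univ :=
    eq_univ_of_card _ (by rw [card_image_of_injOn (hE.injOn e he), hE.card_eq e he]; rfl)
  exact mem_image.mp (himage ▸ mem_univ i)

variable [DecidableEq V]

theorem eq_of_erase_subset (hE : IsTripartite E π) (he : e ∈ E) (hg : g ∈ E) {x w : V}
    (hx : x ∈ e) (hxg : e.erase x ⊆ g) (hw : w ∈ g) (hwe : w ∉ e) : π w = π x := by
  obtain ⟨v, hv, hvw⟩ := hE.exists_mem_eq he (π w)
  obtain rfl | hvx := eq_or_ne v x
  · exact hvw.symm
  · exact absurd (hE.injOn g hg (hxg (mem_erase.mpr ⟨hvx, hv⟩)) hw hvw ▸ hv) hwe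

theorem card_inter_le_one (hE : IsTripartite E π) (he : e ∈ E) (hf : f ∈ E) (hg : g ∈ E)
    {x : V} (hef : e ∩ f = {x}) (hxg : x ∉ g) (hfg : (f ∩ g).Nonempty) : #(e ∩ g) ≤ 1 := by
  by_contra! h
  have hxe : x ∈ e := (mem_inter.mp (hef ▸ mem_singleton_self x)).1
  have hxf : x ∈ f := (mem_inter.mp (hef ▸ mem_singleton_self x)).2
  obtain ⟨q, hq⟩ := hfg
  obtain ⟨hqf, hqg⟩ := mem_inter.mp hq
  have hqe : q ∉ e := fun hqe =>
    hxg (mem_singleton.mp (hef ▸ mem_inter.mpr ⟨hqe, hqf⟩) ▸ hqg)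
  have hqx : π q = π x := hE.eq_of_erase_subset he hg hxe
    (erase_subset_of_card_le hxe hxg (by rw [hE.card_eq e he]; omega)) hqg hqe
  exact hxg (hE.injOn f hf hqf hxf hqx ▸ hqg)

theorem mem_of_inter_eq_singleton (hE : IsTripartite E π)
    (hbad : ∀ e₁ e₂ e₃, ¬ BadTriple E e₁ e₂ e₃) (he : e ∈ E) (hf : f ∈ E) (hg : g ∈ E) {x : V}
    (hef : e ∩ f = {x}) (heg : (e ∩ g).Nonempty) (hfg : (f ∩ g).Nonempty) : x ∈ g := by
  by_contra hxg
  have hx : x ∈ e ∩ f := hef ▸ mem_singleton_self x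
  have hxg' : ∀ h : Finset V, x ∉ h ∩ g := fun h hxh => hxg (mem_inter.mp hxh).2
  refine hbad e f g ⟨he, hf, hg, ?_, ?_, ?_, by rw [hef, card_singleton],
    le_antisymm (hE.card_inter_le_one hf he hg (by rw [inter_comm, hef]) hxg heg) hfg.card_pos,
    le_antisymm (hE.card_inter_le_one he hf hg hef hxg hfg) heg.card_pos,
    fun h => hxg' f (h ▸ hx), fun h => ?_, fun h => hxg' e (h ▸ hx)⟩
  · rintro rfl
    rw [inter_self] at hef
    simpa [hef] using hE.card_eq e he
  · rintro rfl
    exact hxg (mem_inter.mp hx).2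
  · rintro rfl
    exact hxg (mem_inter.mp hx).1
  · obtain ⟨q, hq⟩ := hfg
    obtain ⟨hqf, hqg⟩ := mem_inter.mp hq
    have hqx : q = x := mem_singleton.mp (hef ▸ mem_inter.mpr ⟨(mem_inter.mp (h ▸ hq)).1, hqf⟩)
    exact hxg (hqx ▸ hqg)

theorem inter_subset_of_two_le_card_inter (hE : IsTripartite E π) (he : e ∈ E) (hf : f ∈ E)
    (hg : g ∈ E) (hef : e ≠ f) (h2ef : 2 ≤ #(e ∩ f)) (h2eg : 2 ≤ #(e ∩ g))
    (h2fg : 2 ≤ #(f ∩ g)) : e ∩ f ⊆ g := by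
  intro v hv
  by_contra hvg
  obtain ⟨hve, hvf⟩ := mem_inter.mp hv
  have hcard : #e = #f := by rw [hE.card_eq e he, hE.card_eq f hf]
  obtain ⟨z, hze, hzf⟩ := not_subset.mp fun hsub => hef (eq_of_subset_of_card_le hsub hcard.ge)
  obtain ⟨z', hz'f, hz'e⟩ := not_subset.mp fun hsub =>
    hef (eq_of_subset_of_card_le hsub hcard.le).symm
  have hπ : π z' = π z := hE.eq_of_erase_subset he hf hze
    (erase_subset_of_card_le hze hzf (by rw [hE.card_eq e he]; omega)) hz'f hz'e
  have hzg : z ∈ g := erase_subset_of_card_le hve hvg (by rw [hE.card_eq e he]; omega)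
    (mem_erase.mpr ⟨fun h => hzf (h ▸ hvf), hze⟩)
  have hz'g : z' ∈ g := erase_subset_of_card_le hvf hvg (by rw [hE.card_eq f hf]; omega)
    (mem_erase.mpr ⟨fun h => hz'e (h ▸ hve), hz'f⟩)
  exact hzf (hE.injOn g hg hz'g hzg hπ ▸ hz'f)

theorem exists_forall_mem_of_pairwise_inter (hE : IsTripartite E π)
    (hbad : ∀ e₁ e₂ e₃, ¬ BadTriple E e₁ e₂ e₃)
    {F : Finset (Finset V)} (hFE : F ⊆ E) (hF : F.Nonempty) {p : V → Prop}
    (hp : ∀ e ∈ F, ∀ f ∈ F, ∃ v ∈ e ∩ f, p v) : ∃ u, p u ∧ ∀ e ∈ F, u ∈ e := by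
  have hne : ∀ e ∈ F, ∀ f ∈ F, (e ∩ f).Nonempty := fun e he f hf =>
    let ⟨v, hv, _⟩ := hp e he f hf; ⟨v, hv⟩
  by_cases h1 : ∃ e ∈ F, ∃ f ∈ F, #(e ∩ f) = 1
  · obtain ⟨e, he, f, hf, hef⟩ := h1
    obtain ⟨x, hx⟩ := card_eq_one.mp hef
    obtain ⟨v, hv, hpv⟩ := hp e he f hf
    rw [hx, mem_singleton] at hv
    subst hv
    exact ⟨v, hpv, fun g hg => hE.mem_of_inter_eq_singleton hbad (hFE he) (hFE hf) (hFE hg) hx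
      (hne e he g hg) (hne f hf g hg)⟩
  · push Not at h1
    have h2 : ∀ e ∈ F, ∀ f ∈ F, 2 ≤ #(e ∩ f) := fun e he f hf => by
      have := (hne e he f hf).card_pos
      have := h1 e he f hf
      omega
    obtain ⟨e, he⟩ := hF
    by_cases hsingle : ∀ f ∈ F, f = e
    · obtain ⟨v, hv, hpv⟩ := hp e he e he
      exact ⟨v, hpv, fun g hg => hsingle g hg ▸ (mem_inter.mp hv).1⟩
    · push Not at hsingle
      obtain ⟨f, hf, hfe⟩ := hsingle
      obtain ⟨v, hv, hpv⟩ := hp e he f hf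
      exact ⟨v, hpv, fun g hg => hE.inter_subset_of_two_le_card_inter (hFE he) (hFE hf) (hFE hg)
        hfe.symm (h2 e he f hf) (h2 e he g hg) (h2 f hf g hg) hv⟩

theorem exists_le_of_forall_isVertexCover [Fintype V] (hE : IsTripartite E π)
    (hbad : ∀ e₁ e₂ e₃, ¬ BadTriple E e₁ e₂ e₃) {a : V → ℕ}
    (ha : ∀ C, IsVertexCover E C → 2 ≤ ∑ v ∈ C, a v) :
    ∃ e₁ ∈ E, ∃ e₂ ∈ E, ∀ v, (if v ∈ e₁ then 1 else 0) + (if v ∈ e₂ then 1 else 0) ≤ a v := by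
  by_contra! h
  set F := E.filter fun e => ∀ v ∈ e, a v ≠ 0
  have hF : ∀ e ∈ F, ∀ f ∈ F, ∃ v ∈ e ∩ f, a v = 1 := by
    intro e he f hf
    obtain ⟨v, hv⟩ := h e (mem_filter.mp he).1 f (mem_filter.mp hf).1
    have hae := (mem_filter.mp he).2 v
    have haf := (mem_filter.mp hf).2 v
    by_cases hve : v ∈ e <;> by_cases hvf : v ∈ f <;> simp only [hve, hvf, if_true, if_false] at hv
    · exact ⟨v, mem_inter.mpr ⟨hve, hvf⟩, by have := hae hve; omega⟩
    · exact absurd (hae hve) (by omega)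
    · exact absurd (haf hvf) (by omega)
    · omega
  have hsmall : ∀ U : Finset V, (∀ e ∈ F, ∃ v ∈ e, v ∈ U) → 2 ≤ ∑ v ∈ U, a v := by
    intro U hU
    set Z := univ.filter fun v => a v = 0
    have hcover : IsVertexCover E (U ∪ Z) := by
      intro e he
      by_cases heF : e ∈ F
      · obtain ⟨v, hv, hvU⟩ := hU e heF
        exact ⟨v, hv, mem_union_left _ hvU⟩
      · simp only [F, mem_filter, he, true_and, not_forall, not_not] at heF
        obtain ⟨v, hv, hav⟩ := heF
        exact ⟨v, hv, mem_union_right _ (mem_filter.mpr ⟨mem_univ v, hav⟩)⟩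
    calc 2 ≤ ∑ v ∈ U ∪ Z, a v := ha _ hcover
      _ = ∑ v ∈ U, a v := (sum_subset subset_union_left fun v hv hvU =>
          (mem_filter.mp ((mem_union.mp hv).resolve_left hvU)).2).symm
  obtain hFempty | hFne := F.eq_empty_or_nonempty
  · simpa using hsmall ∅ (by simp [hFempty])
  · obtain ⟨u, hu, huF⟩ := hE.exists_forall_mem_of_pairwise_inter hbad (filter_subset _ _) hFne hF
    have := hsmall {u} fun e he => ⟨u, huF e he, mem_singleton_self u⟩
    rw [sum_singleton, hu] at this
    omega

end IsTripartite

end Tripartite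

theorem stmt6_general {k V : Type*} [Field k] [Fintype V] [DecidableEq V]
    (E : Finset (Finset V))
    (huniform : ∀ e ∈ E, e.card = 3)
    (Xp : Fin 3 → Finset V)
    (hcover : ∀ v : V, ∃ i, v ∈ Xp i)
    (hpartite : ∀ e ∈ E, ∀ i, (e ∩ Xp i).card = 1)
    (hne : symbolicPower (edgeIdeal k E) 2 ≠ (edgeIdeal k E) ^ 2) :
    ∃ e₁ e₂ e₃ : Finset V, BadTriple E e₁ e₂ e₃ := by
  choose π hπ using hcover
  have hE : IsTripartite E π := .of_mem_parts huniform hπ hpartite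
  by_contra! hbad
  refine hne (le_antisymm (fun f hf => ?_) (pow_le_symbolicPower _ 2))
  rw [f.as_sum]
  refine Ideal.sum_mem _ fun m hm => ?_
  obtain ⟨e₁, he₁, e₂, he₂, hle⟩ :=
    hE.exists_le_of_forall_isVertexCover hbad fun C hC => le_sum_of_mem_symbolicPower hf hm hC
  exact monomial_mem_edgeIdeal_sq he₁ he₂ hle _

/-- if the second symbolic and ordinary powers of the edge ideal of a
simple 3-uniform 3-partite hypergraph differ, the hypergraph contains a bad
subhypergraph of length 3. -/
theorem stmt6 {k V : Type*} [Field k] [Fintype V] [DecidableEq V]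
    (E : Finset (Finset V))
    (huniform : ∀ e ∈ E, e.card = 3)
    (Xp : Fin 3 → Finset V)
    (hdisj : Pairwise fun i j => Disjoint (Xp i) (Xp j))
    (hcover : ∀ v : V, ∃ i, v ∈ Xp i)
    (hpartite : ∀ e ∈ E, ∀ i, (e ∩ Xp i).card = 1)
    (hne : symbolicPower (edgeIdeal k E) 2 ≠ (edgeIdeal k E) ^ 2) :
    ∃ e₁ e₂ e₃ : Finset V, BadTriple E e₁ e₂ e₃ :=
  stmt6_general E huniform Xp hcover hpartite hne
end

section
/- Let n = tq + r with 0 ≤ r ≤ t−1 and 2 ≤ t ≤ n. The fractional chromatic number of the t-path hypergraph H_t(C_n) equals n/(n−q) if r = 0 and n/(n−q−1) if r ≠ 0. -/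
/-!
Translation by `ZMod n` preserves the hyperedges, so if `S` is a largest independent set then
the uniform fractional colouring by the `n` translates of `S` is optimal and `χ* = n / |S|`:
double counting shows that any fractional colouring has total weight at least `n / |S|`.
A set is independent iff its complement meets every window of `t` consecutive vertices; each
vertex lies in at most `t` windows, so such a transversal has at least `⌈n/t⌉` points, and
`{0, t, 2t, …, (⌈n/t⌉ - 1) t}` is one. Hence `|S| = n - ⌈n/t⌉`, which is `n - q` or `n - q - 1`.
-/

/-- the hyperedges of the t-path hypergraph of the cycle Cₙ: all sets of t
cyclically consecutive vertices. -/
def pathHyperedges (n t : ℕ) [NeZero n] : Finset (Finset (ZMod n)) :=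
  Finset.image
    (fun i : ZMod n => Finset.image (fun j : Fin t => i + ((j : ℕ) : ZMod n)) Finset.univ)
    Finset.univ

/-- fractional chromatic number of a hypergraph on a finite vertex set,
as the optimum of the LP relaxation via fractional covers by independent sets. -/
noncomputable def fracChromatic {V : Type*} [Fintype V] [DecidableEq V]
    (E : Finset (Finset V)) : ℝ :=
  sInf { s : ℝ | ∃ w : Finset V → ℝ,
    (∀ W, 0 ≤ w W) ∧
    (∀ W, w W ≠ 0 → ∀ e ∈ E, ¬ e ⊆ W) ∧
    (∀ v : V, 1 ≤ ∑ W ∈ Finset.univ.filter (fun W => v ∈ W), w W) ∧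
    s = ∑ W : Finset V, w W }

open Finset Pointwise

lemma mul_add_ceilDiv_eq {t q r : ℕ} (hr : r < t) :
    (t * q + r) ⌈/⌉ t = if r = 0 then q else q + 1 := by
  have ht : 0 < t := by omega
  rw [Nat.ceilDiv_eq_add_pred_div]
  split_ifs with h
  · rw [h, add_zero, Nat.add_sub_assoc ht, Nat.mul_add_div ht, Nat.div_eq_of_lt (by omega),
      add_zero]
  · rw [show t * q + r + t - 1 = t * (q + 1) + (r - 1) by rw [mul_add]; omega,
      Nat.mul_add_div ht, Nat.div_eq_of_lt (by omega), add_zero]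

lemma ceilDiv_lt_self {n t : ℕ} (hn : 2 ≤ n) (ht : 2 ≤ t) : n ⌈/⌉ t < n := by
  have : n ⌈/⌉ t ≤ n - 1 := (ceilDiv_le_iff_le_mul (by omega)).mpr
    (le_trans (by omega) (Nat.mul_le_mul_right (n - 1) ht))
  omega

section Hypergraph

variable {V : Type*} [Fintype V] [DecidableEq V]

def IsIndependent (E : Finset (Finset V)) (W : Finset V) : Prop := ∀ e ∈ E, ¬ e ⊆ W

lemma card_le_mul_sum_of_fracColoring {E : Finset (Finset V)} {m : ℕ}
    (hm : ∀ W, IsIndependent E W → #W ≤ m) {w : Finset V → ℝ} (hw : ∀ W, 0 ≤ w W)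
    (hind : ∀ W, w W ≠ 0 → IsIndependent E W) (hcov : ∀ v, 1 ≤ ∑ W with v ∈ W, w W) :
    (Fintype.card V : ℝ) ≤ m * ∑ W, w W := by
  calc (Fintype.card V : ℝ) = ∑ _v : V, (1 : ℝ) := by simp
  _ ≤ ∑ v, ∑ W with v ∈ W, w W := sum_le_sum fun v _ => hcov v
  _ = ∑ W, (#W : ℝ) * w W := by
      rw [sum_comm' (t' := univ) (s' := fun W => W) (by simp)]
      simp
  _ ≤ ∑ W, (m : ℝ) * w W := by
      refine sum_le_sum fun W _ => ?_
      by_cases hW : w W = 0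
      · simp [hW]
      · exact mul_le_mul_of_nonneg_right (by exact_mod_cast hm W (hind W hW)) (hw W)
  _ = m * ∑ W, w W := (mul_sum ..).symm

end Hypergraph

section Translates

variable {G : Type*} [AddCommGroup G] [Fintype G] [DecidableEq G]

lemma card_filter_mem_vadd_finset (A : Finset G) (v : G) : #{x : G | v ∈ x +ᵥ A} = #A := by
  have : ({x : G | v ∈ x +ᵥ A} : Finset G) = A.image (v - ·) := by
    ext x
    simp only [mem_filter, mem_univ, true_and, mem_vadd_finset, vadd_eq_add, mem_image]
    exact ⟨fun ⟨a, ha, hx⟩ => ⟨a, ha, by rw [← hx]; abel⟩,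
      fun ⟨a, ha, hx⟩ => ⟨a, ha, by rw [← hx]; abel⟩⟩
  rw [this, card_image_of_injective _ sub_right_injective]

lemma card_le_card_mul_card_of_inter_vadd_nonempty {A T : Finset G}
    (hT : ∀ x : G, (T ∩ (x +ᵥ A)).Nonempty) : Fintype.card G ≤ #T * #A :=
  calc Fintype.card G = ∑ _x : G, 1 := by simp
  _ ≤ ∑ x, #(T ∩ (x +ᵥ A)) := sum_le_sum fun x _ => (hT x).card_pos
  _ = ∑ v ∈ T, #{x : G | v ∈ x +ᵥ A} := by
      simp only [card_eq_sum_ones, sum_filter, ← filter_mem_eq_inter]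
      exact sum_comm
  _ = #T * #A := by simp [card_filter_mem_vadd_finset]

theorem fracChromatic_eq_card_div_card {E : Finset (Finset G)} {S : Finset G}
    (hS : S.Nonempty) (hind : ∀ x : G, IsIndependent E (x +ᵥ S))
    (hmax : ∀ W, IsIndependent E W → #W ≤ #S) :
    fracChromatic E = Fintype.card G / #S := by
  have hS₀ : (0 : ℝ) < #S := by exact_mod_cast hS.card_pos
  refine IsLeast.csInf_eq ⟨⟨fun W => #{x : G | x +ᵥ S = W} / #S, fun W => by positivity,
    ?_, fun v => ?_, ?_⟩, ?_⟩
  · intro W hW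
    obtain ⟨x, hx⟩ : ({x : G | x +ᵥ S = W} : Finset G).Nonempty := by
      by_contra h
      simp [not_nonempty_iff_eq_empty.mp h] at hW
    exact (mem_filter.mp hx).2 ▸ hind x
  · have hfib : ∑ W with v ∈ W, #{x : G | x +ᵥ S = W} = #S := by
      rw [← card_filter_mem_vadd_finset S v,
        card_eq_sum_card_fiberwise (f := (· +ᵥ S)) (t := {W | v ∈ W})
          fun x hx => by simpa using hx]
      refine sum_congr rfl fun W hW => ?_
      rw [filter_filter]
      refine congrArg card (filter_congr fun x _ => ?_)
      simp only [mem_filter_univ] at hW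
      exact ⟨fun h => ⟨h ▸ hW, h⟩, And.right⟩
    rw [← sum_div, ← Nat.cast_sum, hfib, div_self hS₀.ne']
  · rw [← sum_div, ← Nat.cast_sum, ← card_eq_sum_card_fiberwise (by simp), card_univ]
  · rintro _ ⟨w, hw, hind', hcov, rfl⟩
    rw [div_le_iff₀ hS₀, mul_comm]
    exact card_le_mul_sum_of_fracColoring hmax hw hind' hcov

end Translates

def window (n t : ℕ) : Finset (ZMod n) := univ.image fun j : Fin t => ((j : ℕ) : ZMod n)

lemma mem_pathHyperedges {n t : ℕ} [NeZero n] {e : Finset (ZMod n)} :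
    e ∈ pathHyperedges n t ↔ ∃ i : ZMod n, i +ᵥ window n t = e := by
  simp [pathHyperedges, window, vadd_finset_def, image_image, Function.comp_def]

lemma card_window_le (n t : ℕ) : #(window n t) ≤ t :=
  card_image_le.trans (by simp)

def progression (n t c : ℕ) : Finset (ZMod n) := (range c).image fun k => ((k * t : ℕ) : ZMod n)

lemma card_progression {n t c : ℕ} (ht : 0 < t) (hc : (c - 1) * t < n) :
    #(progression n t c) = c := by
  rw [progression, card_image_of_injOn, card_range]
  intro k hk l hl hkl
  have hlt : ∀ m ∈ (range c : Set ℕ), m * t < n := fun m hm =>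
    lt_of_le_of_lt (Nat.mul_le_mul_right t (by simp at hm; omega)) hc
  have := congrArg ZMod.val hkl
  simp only [ZMod.val_natCast_of_lt (hlt k hk), ZMod.val_natCast_of_lt (hlt l hl)] at this
  exact Nat.eq_of_mul_eq_mul_right ht this

lemma exists_add_mem_progression {n t c : ℕ} [NeZero n] (hc : 0 < c) (hn : n ≤ c * t)
    (y : ZMod n) : ∃ j : Fin t, y + ((j : ℕ) : ZMod n) ∈ progression n t c := by
  have ht : 0 < t := Nat.pos_of_ne_zero fun h => NeZero.ne n (by simpa [h] using hn)
  obtain ⟨a, ha, rfl⟩ : ∃ a < n, (a : ZMod n) = y :=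
    ⟨y.val, ZMod.val_lt y, ZMod.natCast_zmod_val y⟩
  set k := a ⌈/⌉ t
  -- `k * t` is the first multiple of `t` at or after `a`
  have hup : a ≤ k * t := mul_comm t k ▸ (ceilDiv_le_iff_le_mul ht).mp le_rfl
  have hlow : k * t < a + t := (Nat.div_mul_le_self (a + t - 1) t).trans_lt (by omega)
  by_cases hkc : k < c
  · refine ⟨⟨k * t - a, by omega⟩, mem_image.mpr ⟨k, mem_range.mpr hkc, ?_⟩⟩
    simp only [← Nat.cast_add, Nat.add_sub_cancel' hup]
  · have : c * t ≤ k * t := Nat.mul_le_mul_right t (not_lt.mp hkc)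
    refine ⟨⟨n - a, by omega⟩, mem_image.mpr ⟨0, mem_range.mpr hc, ?_⟩⟩
    simp only [← Nat.cast_add, Nat.add_sub_cancel' ha.le, zero_mul, ZMod.natCast_self,
      Nat.cast_zero]

lemma isIndependent_vadd_compl_progression {n t c : ℕ} [NeZero n] (hc : 0 < c)
    (hn : n ≤ c * t) (x : ZMod n) :
    IsIndependent (pathHyperedges n t) (x +ᵥ (progression n t c)ᶜ) := by
  rintro e he hsub
  obtain ⟨i, rfl⟩ := mem_pathHyperedges.mp he
  obtain ⟨j, hj⟩ := exists_add_mem_progression hc hn (-x + i)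
  have hij : i + ((j : ℕ) : ZMod n) ∈ i +ᵥ window n t :=
    vadd_mem_vadd_finset (mem_image_of_mem _ (mem_univ j))
  have := neg_vadd_mem_iff.mpr (hsub hij)
  rw [mem_compl, vadd_eq_add, ← add_assoc] at this
  exact this hj

lemma ceilDiv_le_card_compl_of_isIndependent {n t : ℕ} [NeZero n] (ht : 0 < t)
    {W : Finset (ZMod n)} (hW : IsIndependent (pathHyperedges n t) W) : n ⌈/⌉ t ≤ #Wᶜ := by
  have hmeet : ∀ x : ZMod n, (Wᶜ ∩ (x +ᵥ window n t)).Nonempty := fun x => by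
    obtain ⟨b, hb, hbW⟩ := not_subset.mp (hW _ (mem_pathHyperedges.mpr ⟨x, rfl⟩))
    exact ⟨b, mem_inter.mpr ⟨mem_compl.mpr hbW, hb⟩⟩
  have := card_le_card_mul_card_of_inter_vadd_nonempty hmeet
  rw [ZMod.card] at this
  exact (ceilDiv_le_iff_le_mul ht).mpr
    (this.trans (mul_comm #Wᶜ t ▸ Nat.mul_le_mul_left _ (card_window_le n t)))

theorem fracChromatic_pathHyperedges {n t : ℕ} [NeZero n] (ht : 0 < t) (hc : n ⌈/⌉ t < n) :
    fracChromatic (pathHyperedges n t) = n / (n - (n ⌈/⌉ t : ℕ) : ℝ) := by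
  set c := n ⌈/⌉ t
  have hgc : ∀ k, c ≤ k ↔ n ≤ t * k := fun k => ceilDiv_le_iff_le_mul ht
  have hc₀ : 0 < c := Nat.pos_of_ne_zero fun h => by
    have := (hgc 0).mp h.le
    simp_all [NeZero.ne n]
  have hcn : n ≤ c * t := mul_comm t c ▸ (hgc c).mp le_rfl
  have hcn' : (c - 1) * t < n := by
    by_contra! h
    have := (hgc (c - 1)).mpr (mul_comm t (c - 1) ▸ h)
    omega
  have hS : #(progression n t c)ᶜ = n - c := by
    rw [card_compl, ZMod.card, card_progression ht hcn']
  rw [fracChromatic_eq_card_div_card (S := (progression n t c)ᶜ) (card_pos.mp (by omega))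
    (isIndependent_vadd_compl_progression hc₀ hcn) fun W hW => ?_, ZMod.card, hS,
    Nat.cast_sub hc.le]
  have := ceilDiv_le_card_compl_of_isIndependent ht hW
  rw [card_compl, ZMod.card] at this
  omega

theorem stmt15_general (n t q r : ℕ) [NeZero n] (hn : 2 ≤ n) (ht : 2 ≤ t)
    (hq : n = t * q + r) (hr : r < t) :
    fracChromatic (pathHyperedges n t) =
      if r = 0 then (n : ℝ) / ((n : ℝ) - (q : ℝ))
      else (n : ℝ) / ((n : ℝ) - (q : ℝ) - 1) := by
  have hc : n ⌈/⌉ t = if r = 0 then q else q + 1 := hq ▸ mul_add_ceilDiv_eq hr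
  rw [fracChromatic_pathHyperedges (by omega) (ceilDiv_lt_self hn ht), hc]
  split_ifs <;> push_cast <;> ring

/-- the fractional chromatic number of the t-path hypergraph of Cₙ,
where n = t*q + r with 0 ≤ r < t, equals n/(n-q) if r = 0 and n/(n-q-1) otherwise. -/
theorem stmt15 (n t q r : ℕ) [NeZero n] (hn : 2 ≤ n) (ht : 2 ≤ t) (htn : t ≤ n)
    (hq : n = t * q + r) (hr : r < t) :
    fracChromatic (pathHyperedges n t) =
      if r = 0 then (n : ℝ) / ((n : ℝ) - (q : ℝ))
      else (n : ℝ) / ((n : ℝ) - (q : ℝ) - 1) :=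
  stmt15_general n t q r hn ht hq hr
end
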